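/- arXiv:1804.05264 — 2 statements merged into one kernel-verified Lean document; each statement's English description precedes it below -/
import Mathlib

section
/- Let V and V' be realizations of M, let W and W' be normal matrices for V and V' respectively, and let S = Vᵀ * W and S' = V'ᵀ * W' be the corresponding slack matrices. Then V and V' are projectively equivalent if and only if there exist an invertible diagonal matrix D_n : Matrix (Fin n) (Fin n) k and an invertible diagonal matrix D_h : Matrix (Fin h) (Fin h) k such that S' = D_n * S * D_h. -/
open Classical Matrix MvPolynomial

/-- `V` is a realization of the matroid `M`: a set `I` is independent in `M` iff the
columns of `V` indexed by `I` are linearly independent over `k`. -/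
def IsRealization {k : Type*} [Field k] {n d : ℕ} (M : Matroid (Fin n))
    (V : Matrix (Fin (d + 1)) (Fin n) k) : Prop :=
  ∀ I : Set (Fin n), M.Indep I ↔ LinearIndependent k (fun i : I => Vᵀ (i : Fin n))

/-- `F` is a hyperplane of `M`: a flat of `M` of rank `d`. -/
def IsHyperplane {n : ℕ} (M : Matroid (Fin n)) (d : ℕ) (F : Set (Fin n)) : Prop :=
  M.IsFlat F ∧ ∃ I, M.IsBasis I F ∧ I.ncard = d

/-- `H` is a bijection onto the set of hyperplanes of `M`. -/
def HypEnum {n h : ℕ} (M : Matroid (Fin n)) (d : ℕ) (H : Fin h → Set (Fin n)) : Prop :=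
  Function.Injective H ∧ ∀ F : Set (Fin n), (∃ j, H j = F) ↔ IsHyperplane M d F

/-- `M` has rank `r` : some base of `M` has cardinality `r`. -/
def HasRank {n : ℕ} (M : Matroid (Fin n)) (r : ℕ) : Prop :=
  ∃ B, M.IsBase B ∧ B.ncard = r

/-- `W` is a normal matrix for the realization `V`: the dot product of column `j` of `W`
with column `i` of `V` is zero iff `i ∈ H j`. -/
def IsNormalMatrix {k : Type*} [Field k] {n d h : ℕ} (H : Fin h → Set (Fin n))
    (V : Matrix (Fin (d + 1)) (Fin n) k) (W : Matrix (Fin (d + 1)) (Fin h) k) : Prop :=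
  ∀ i j, (∑ r : Fin (d + 1), W r j * V r i) = 0 ↔ i ∈ H j

/-- Projective equivalence of realizations. -/
def ProjEquiv {k : Type*} [Field k] {n d : ℕ}
    (V V' : Matrix (Fin (d + 1)) (Fin n) k) : Prop :=
  ∃ (A : Matrix (Fin (d + 1)) (Fin (d + 1)) k) (b : Fin n → kˣ),
    IsUnit A ∧ V' = A * V * Matrix.diagonal (fun i => (b i : k))

/-- The index type of slack variables: pairs `(i, j)` with `i ∉ H j`. -/
abbrev SlackVar {n h : ℕ} (H : Fin h → Set (Fin n)) : Type :=
  {p : Fin n × Fin h // p.1 ∉ H p.2}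

/-- The symbolic slack matrix of `M`. -/
noncomputable def symbSlack {n h : ℕ} (H : Fin h → Set (Fin n)) (k : Type*) [Field k] :
    Matrix (Fin n) (Fin h) (MvPolynomial (SlackVar H) k) :=
  fun i j => if hij : i ∈ H j then 0 else X ⟨(i, j), hij⟩

/-- The ideal `J` generated by the `(d+2)`-minors of the symbolic slack matrix. -/
noncomputable def minorIdeal {n h : ℕ} (d : ℕ) (H : Fin h → Set (Fin n)) (k : Type*)
    [Field k] : Ideal (MvPolynomial (SlackVar H) k) :=
  Ideal.span { f | ∃ (r : Fin (d + 2) → Fin n) (c : Fin (d + 2) → Fin h),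
    Function.Injective r ∧ Function.Injective c ∧
      f = ((symbSlack H k).submatrix r c).det }

/-- The product `P` of all slack variables. -/
noncomputable def allVarsProd {n h : ℕ} (H : Fin h → Set (Fin n)) (k : Type*) [Field k] :
    MvPolynomial (SlackVar H) k :=
  ∏ e : SlackVar H, X e

/-- The slack ideal `I_M` : the saturation of `J` at `P`, as a set. -/
noncomputable def slackSet {n h : ℕ} (d : ℕ) (H : Fin h → Set (Fin n)) (k : Type*) [Field k] :
    Set (MvPolynomial (SlackVar H) k) :=
  {f | ∃ N : ℕ, allVarsProd H k ^ N * f ∈ minorIdeal d H k}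

/-- The matrix `S(s)` obtained by evaluating the symbolic slack matrix at `s`. -/
noncomputable def slackEval {k : Type*} [Field k] {n h : ℕ} (H : Fin h → Set (Fin n))
    (s : SlackVar H → k) : Matrix (Fin n) (Fin h) k :=
  fun i j => if hij : i ∈ H j then 0 else s ⟨(i, j), hij⟩

/-- Cyclic successor in `Fin m`. -/
def cycSucc {m : ℕ} (i : Fin m) : Fin m := ⟨(i.val + 1) % m, Nat.mod_lt _ i.pos⟩

/-- The cycle ideal `C_S` of a slack matrix `S`. -/
noncomputable def cycleIdeal {k : Type*} [Field k] {n h : ℕ} (H : Fin h → Set (Fin n))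
    (S : Matrix (Fin n) (Fin h) k) : Ideal (MvPolynomial (SlackVar H) k) :=
  Ideal.span { f | ∃ (m : ℕ) (_ : 2 ≤ m) (a : Fin m → Fin n) (b : Fin m → Fin h)
    (_ : Function.Injective a) (_ : Function.Injective b)
    (h1 : ∀ i, a i ∉ H (b i)) (h2 : ∀ i, a (cycSucc i) ∉ H (b i)),
    f = C (∏ i, S (a (cycSucc i)) (b i)) * ∏ i, X ⟨(a i, b i), h1 i⟩
      - C (∏ i, S (a i) (b i)) * ∏ i, X ⟨(a (cycSucc i), b i), h2 i⟩ }

/-!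
A normal vector of a hyperplane `F` of `M` is unique up to a nonzero scalar: `F` contains `d`
independent points which, with one point outside `F`, give a basis of `k^(d+1)`. If
`V' = A * V * B`, the columns of `Aᵀ * W'` are normal vectors for `V`, hence a column rescaling of
`W`, and the slack matrix is rescaled accordingly. Conversely, a base of `M` gives `d + 1`
fundamental hyperplanes on which the slack matrix is diagonal with nonzero diagonal, so the
corresponding `(d+1) × (d+1)` block `G` of `W` (and `G'` of `W'`) is invertible; restricting
`S' = D_n * S * D_h` to those columns gives `V'ᵀ * G' = D_n * Vᵀ * G * D` for a diagonal `D`,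
which can be solved for `V'ᵀ`.
-/

section DotProduct

variable {k ι m : Type*} [Fintype m]

lemma eq_zero_of_forall_dotProduct_eq_zero_of_span_eq_top [CommSemiring k] {v : ι → m → k}
    (hv : Submodule.span k (Set.range v) = ⊤) {u : m → k} (hu : ∀ i, u ⬝ᵥ v i = 0) :
    u = 0 := by
  apply (dotProductEquiv k m).injective
  rw [map_zero]
  exact LinearMap.ext_on_range hv hu

lemma dotProduct_smul_eq_of_span_eq_top [CommRing k] {v : ι → m → k}
    (hv : Submodule.span k (Set.range v) = ⊤) (i₀ : ι) {w w' : m → k}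
    (hw : ∀ i ≠ i₀, w ⬝ᵥ v i = 0) (hw' : ∀ i ≠ i₀, w' ⬝ᵥ v i = 0) :
    (w' ⬝ᵥ v i₀) • w = (w ⬝ᵥ v i₀) • w' := by
  rw [← sub_eq_zero]
  refine eq_zero_of_forall_dotProduct_eq_zero_of_span_eq_top hv fun i => ?_
  rw [sub_dotProduct, smul_dotProduct, smul_dotProduct, smul_eq_mul, smul_eq_mul]
  by_cases hi : i = i₀
  · rw [hi, mul_comm, sub_self]
  · rw [hw i hi, hw' i hi, mul_zero, mul_zero, sub_zero]

end DotProduct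

section Realization

variable {k : Type*} [Field k] {n d h : ℕ} {M : Matroid (Fin n)} {H : Fin h → Set (Fin n)}
  {V V' : Matrix (Fin (d + 1)) (Fin n) k} {W W' : Matrix (Fin (d + 1)) (Fin h) k}

lemma IsRealization.span_eq_top (hV : IsRealization M V) {J : Set (Fin n)} (hJ : M.Indep J)
    (hcard : J.ncard = d + 1) : Submodule.span k (Set.range fun i : J => Vᵀ i) = ⊤ := by
  have := J.toFinite.fintype
  refine ((hV J).mp hJ).span_eq_top_of_card_eq_finrank' ?_
  rw [Module.finrank_fin_fun, ← Nat.card_eq_fintype_card, Nat.card_coe_set_eq, hcard]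

lemma IsHyperplane.exists_indep_insert (hrk : HasRank M (d + 1)) {F : Set (Fin n)}
    (hF : IsHyperplane M d F) :
    ∃ I i₀, I ⊆ F ∧ i₀ ∉ F ∧ M.Indep (insert i₀ I) ∧ (insert i₀ I).ncard = d + 1 := by
  obtain ⟨hFflat, I, hI, hIcard⟩ := hF
  obtain ⟨B, hB, hBcard⟩ := hrk
  have hFE : F ⊂ M.E := by
    refine hFflat.subset_ground.ssubset_of_ne fun hFE => ?_
    have hIB := (Matroid.isBasis_ground_iff.mp (hFE ▸ hI)).ncard_eq_ncard_of_isBase hB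
    omega
  obtain ⟨i₀, hi₀E, hi₀F⟩ := Set.exists_of_ssubset hFE
  have hi₀I : i₀ ∉ I := fun hi₀I => hi₀F (hI.subset hi₀I)
  refine ⟨I, i₀, hI.subset, hi₀F, ?_, ?_⟩
  · rw [hI.indep.insert_indep_iff_of_notMem hi₀I, hI.closure_eq_closure, hFflat.closure]
    exact ⟨hi₀E, hi₀F⟩
  · rw [Set.ncard_insert_of_notMem hi₀I I.toFinite, hIcard]

lemma isNormalMatrix_iff_slack :
    IsNormalMatrix H V W ↔ ∀ i j, (Vᵀ * W) i j = 0 ↔ i ∈ H j := by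
  simp only [IsNormalMatrix, mul_apply, transpose_apply, mul_comm]

lemma IsNormalMatrix.exists_eq_mul_diagonal (hrk : HasRank M (d + 1)) (hH : HypEnum M d H)
    (hV : IsRealization M V) (hW : IsNormalMatrix H V W) (hW' : IsNormalMatrix H V W') :
    ∃ c : Fin h → kˣ, W' = W * diagonal (fun j => (c j : k)) := by
  have hcol : ∀ j, ∃ c : kˣ, W'ᵀ j = (c : k) • Wᵀ j := by
    intro j
    obtain ⟨I, i₀, hIF, hi₀F, hJ, hcard⟩ := ((hH.2 (H j)).mp ⟨j, rfl⟩).exists_indep_insert hrk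
    have hoff : ∀ i : ↥(insert i₀ I), i ≠ ⟨i₀, Set.mem_insert _ _⟩ → (i : Fin n) ∈ H j :=
      fun i hi => hIF ((Set.mem_insert_iff.mp i.2).resolve_left fun hi₀ => hi (Subtype.ext hi₀))
    have hprop := dotProduct_smul_eq_of_span_eq_top (hV.span_eq_top hJ hcard)
      ⟨i₀, Set.mem_insert _ _⟩ (w := Wᵀ j) (w' := W'ᵀ j)
      (fun i hi => (hW i j).mpr (hoff i hi)) (fun i hi => (hW' i j).mpr (hoff i hi))
    have hα : Wᵀ j ⬝ᵥ Vᵀ i₀ ≠ 0 := fun h0 => hi₀F ((hW i₀ j).mp h0)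
    have hβ : W'ᵀ j ⬝ᵥ Vᵀ i₀ ≠ 0 := fun h0 => hi₀F ((hW' i₀ j).mp h0)
    refine ⟨Units.mk0 _ (div_ne_zero hβ hα), ?_⟩
    rw [Units.val_mk0, div_eq_inv_mul, mul_smul, hprop, smul_smul, inv_mul_cancel₀ hα, one_smul]
  choose c hc using hcol
  refine ⟨c, ext fun r j => ?_⟩
  rw [mul_diagonal, mul_comm]
  exact congrFun (hc j) r

lemma projEquiv_iff_transpose_eq : ProjEquiv V V' ↔
    ∃ (C : Matrix (Fin (d + 1)) (Fin (d + 1)) k) (b : Fin n → kˣ),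
      IsUnit C ∧ V'ᵀ = diagonal (fun i => (b i : k)) * Vᵀ * C := by
  constructor
  · rintro ⟨A, b, hA, rfl⟩
    exact ⟨Aᵀ, b, (isUnit_transpose _).mpr hA, by simp only [transpose_mul, diagonal_transpose,
      Matrix.mul_assoc]⟩
  · rintro ⟨C, b, hC, hV'⟩
    refine ⟨Cᵀ, b, (isUnit_transpose _).mpr hC, ?_⟩
    rw [← transpose_transpose V', hV']
    simp only [transpose_mul, diagonal_transpose, transpose_transpose, Matrix.mul_assoc]

lemma IsNormalMatrix.of_transpose_eq {C : Matrix (Fin (d + 1)) (Fin (d + 1)) k} {b : Fin n → kˣ}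
    (hW' : IsNormalMatrix H V' W') (hV' : V'ᵀ = diagonal (fun i => (b i : k)) * Vᵀ * C) :
    IsNormalMatrix H V (C * W') := by
  rw [isNormalMatrix_iff_slack] at hW' ⊢
  intro i j
  rw [← hW' i j, hV', Matrix.mul_assoc, Matrix.mul_assoc, diagonal_mul, mul_eq_zero,
    or_iff_right (b i).ne_zero]

lemma isHyperplane_closure_diff_singleton {B : Set (Fin n)} (hB : M.IsBase B)
    (hcard : B.ncard = d + 1) {b : Fin n} (hb : b ∈ B) :
    IsHyperplane M d (M.closure (B \ {b})) :=
  ⟨M.isFlat_closure _, B \ {b}, (hB.indep.subset Set.sdiff_subset).isBasis_closure,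
    by rw [Set.ncard_sdiff_singleton_of_mem hb, hcard, Nat.add_sub_cancel]⟩

lemma exists_fundamental_hyperplanes (hrk : HasRank M (d + 1)) (hH : HypEnum M d H) :
    ∃ (e : Fin (d + 1) → Fin n) (f : Fin (d + 1) → Fin h), ∀ r s, e r ∈ H (f s) ↔ r ≠ s := by
  obtain ⟨B, hB, hcard⟩ := hrk
  have := B.toFinite.fintype
  let eB : Fin (d + 1) ≃ B := (Fintype.equivFinOfCardEq (by
    rw [← Nat.card_eq_fintype_card, Nat.card_coe_set_eq, hcard])).symm
  have hf : ∀ s, ∃ j, H j = M.closure (B \ {(eB s : Fin n)}) := fun s =>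
    (hH.2 _).mpr (isHyperplane_closure_diff_singleton hB hcard (eB s).2)
  choose f hf using hf
  refine ⟨fun r => eB r, f, fun r s => ?_⟩
  rw [hf]
  constructor
  · rintro hmem rfl
    exact hB.indep.notMem_closure_sdiff_of_mem (eB r).2 hmem
  · intro hrs
    refine M.subset_closure _ (Set.sdiff_subset.trans hB.subset_ground) ⟨(eB r).2, ?_⟩
    simpa [Subtype.val_inj] using hrs

lemma IsNormalMatrix.isUnit_submatrix (hW : IsNormalMatrix H V W) {e : Fin (d + 1) → Fin n}
    {f : Fin (d + 1) → Fin h} (hef : ∀ r s, e r ∈ H (f s) ↔ r ≠ s) :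
    IsUnit (W.submatrix id f) := by
  rw [isNormalMatrix_iff_slack] at hW
  have hdiag : (V.submatrix id e)ᵀ * W.submatrix id f =
      diagonal fun r => (Vᵀ * W) (e r) (f r) := by
    ext r s
    rw [transpose_submatrix, ← submatrix_mul _ _ _ _ _ Function.bijective_id]
    by_cases hrs : r = s
    · rw [hrs, diagonal_apply_eq, submatrix_apply]
    · rw [diagonal_apply_ne _ hrs, submatrix_apply, (hW _ _).mpr ((hef r s).mpr hrs)]
  have hprod : IsUnit ((V.submatrix id e)ᵀ * W.submatrix id f) := by
    rw [hdiag, isUnit_diagonal, Pi.isUnit_iff]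
    exact fun r => isUnit_iff_ne_zero.mpr fun h0 => (hef r r).mp ((hW _ _).mp h0) rfl
  rw [isUnit_iff_isUnit_det, det_mul] at hprod
  exact (isUnit_iff_isUnit_det _).mpr (isUnit_of_mul_isUnit_right hprod)

end Realization

theorem stmt4_general {k : Type*} [Field k] {n d h : ℕ} (M : Matroid (Fin n))
    (hrk : HasRank M (d + 1))
    (H : Fin h → Set (Fin n)) (hH : HypEnum M d H)
    (V V' : Matrix (Fin (d + 1)) (Fin n) k)
    (hV : IsRealization M V)
    (W W' : Matrix (Fin (d + 1)) (Fin h) k)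
    (hW : IsNormalMatrix H V W) (hW' : IsNormalMatrix H V' W') :
    ProjEquiv V V' ↔
      ∃ (dn : Fin n → kˣ) (dh : Fin h → kˣ),
        V'ᵀ * W' = Matrix.diagonal (fun i => (dn i : k)) * (Vᵀ * W) *
          Matrix.diagonal (fun j => (dh j : k)) := by
  rw [projEquiv_iff_transpose_eq]
  constructor
  · rintro ⟨C, b, -, hV'eq⟩
    obtain ⟨c, hc⟩ := hW.exists_eq_mul_diagonal hrk hH hV (hW'.of_transpose_eq hV'eq)
    refine ⟨b, c, ?_⟩
    rw [hV'eq, Matrix.mul_assoc, Matrix.mul_assoc, hc]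
    simp only [Matrix.mul_assoc]
  · rintro ⟨dn, dh, hS⟩
    obtain ⟨e, f, hef⟩ := exists_fundamental_hyperplanes hrk hH
    have hG' := hW'.isUnit_submatrix hef
    have hrel : V'ᵀ * W'.submatrix id f = diagonal (fun i => (dn i : k)) * Vᵀ *
        (W.submatrix id f * diagonal fun s => (dh (f s) : k)) := by
      ext i s
      have hSentry := congrFun (congrFun hS i) (f s)
      rw [mul_diagonal, diagonal_mul] at hSentry
      rwa [← Matrix.mul_assoc, mul_diagonal, Matrix.mul_assoc, diagonal_mul]
    refine ⟨W.submatrix id f * diagonal (fun s => (dh (f s) : k)) * (W'.submatrix id f)⁻¹, dn,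
      ?_, ?_⟩
    · refine ((hW.isUnit_submatrix hef).mul ?_).mul (isUnit_nonsing_inv_iff.mpr hG')
      exact isUnit_diagonal.mpr (Pi.isUnit_iff.mpr fun s => (dh (f s)).isUnit)
    · rw [← mul_nonsing_inv_cancel_right _ V'ᵀ ((isUnit_iff_isUnit_det _).mp hG'), hrel]
      simp only [Matrix.mul_assoc]

/-- two realizations are projectively equivalent iff their slack matrices
differ by invertible row and column scalings. -/
theorem stmt4 {k : Type*} [Field k] {n d h : ℕ} (M : Matroid (Fin n))
    (hE : M.E = Set.univ) (hrk : HasRank M (d + 1))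
    (H : Fin h → Set (Fin n)) (hH : HypEnum M d H)
    (V V' : Matrix (Fin (d + 1)) (Fin n) k)
    (hV : IsRealization M V) (hV' : IsRealization M V')
    (W W' : Matrix (Fin (d + 1)) (Fin h) k)
    (hW : IsNormalMatrix H V W) (hW' : IsNormalMatrix H V' W') :
    ProjEquiv V V' ↔
      ∃ (dn : Fin n → kˣ) (dh : Fin h → kˣ),
        V'ᵀ * W' = Matrix.diagonal (fun i => (dn i : k)) * (Vᵀ * W) *
          Matrix.diagonal (fun j => (dh j : k)) :=
  stmt4_general M hrk H hH V V' hV W W' hW hW'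
end

section
/- If 1 ∈ I_M (equivalently, P^N ∈ J for some natural number N), then M has no realization over k. Conversely, if k is algebraically closed and M has no realization over k, then 1 ∈ I_M. -/
/-!
If `V` realizes `M`, each hyperplane `H j` is cut out of the columns of `V` by a linear form.
Collecting these forms into a matrix `W` gives the point `Vᵀ * W` of the slack variety: it has
rank at most `d + 1`, so evaluation there kills `J`, and its entries off the zero pattern are
nonzero, so it does not kill `P`. Hence no power of `P` lies in `J`.

Conversely, over an algebraically closed field, if no power of `P` lies in `J` the Nullstellensatz
gives a point `x` with all coordinates nonzero at which every `(d + 2)`-minor of `S(x)` vanishes.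
The rows of `S(x)` then realize `M`: for a base `B` and `b ∈ B`, the column of the hyperplane
`cl(B \ {b})` is zero on `B \ {b}` and nonzero at `b`, which makes the rows of `B` independent and
controls the coefficients of every other row, all of which lie in their span by the minor
condition. Identifying that `(d + 1)`-dimensional span with `k ^ (d + 1)` gives a realization.
-/

open Classical Matrix MvPolynomial

def MinorsVanish {R m κ : Type*} [CommRing R] (t : ℕ) (A : Matrix m κ R) : Prop :=
  ∀ (r : Fin t → m) (c : Fin t → κ), Function.Injective r → Function.Injective c →
    (A.submatrix r c).det = 0

def Matroid.IsRealizedBy {α W : Type*} (M : Matroid α) (k : Type*) [Field k] [AddCommGroup W]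
    [Module k W] (v : α → W) : Prop :=
  ∀ I : Set α, M.Indep I ↔ LinearIndepOn k v I

section LinearAlgebra

variable {k : Type*} [Field k]

lemma LinearIndepOn.finrank_span_image_eq_ncard {W ι : Type*} [AddCommGroup W] [Module k W]
    [Finite ι] {v : ι → W} {s : Set ι} (hv : LinearIndepOn k v s) :
    Module.finrank k (Submodule.span k (v '' s)) = s.ncard := by
  have := Fintype.ofFinite s
  rw [Set.image_eq_range, finrank_span_eq_card hv, ← Nat.card_eq_fintype_card,
    Nat.card_coe_set_eq]

lemma Finsupp.linearCombination_apply_of_forall_ne {ι κ : Type*} {v : ι → κ → k}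
    {s : Set ι} {l : ι →₀ k} (hl : l ∈ Finsupp.supported k k s) {a : ι} {j : κ}
    (hj : ∀ i ∈ s, i ≠ a → v i j = 0) :
    Finsupp.linearCombination k v l j = l a * v a j := by
  rw [Finsupp.linearCombination_apply, Finsupp.sum, Finset.sum_apply]
  refine (Finset.sum_eq_single a (fun i hi hia => ?_) fun ha => ?_).trans (smul_eq_mul _ _)
  · rw [Pi.smul_apply, hj i (hl hi) hia, smul_zero]
  · rw [Finsupp.notMem_support_iff.mp ha, zero_smul, Pi.zero_apply]

lemma exists_det_submatrix_ne_zero {m κ : Type*} [Fintype m] [DecidableEq m] [Fintype κ]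
    {A : Matrix m κ k} (hA : LinearIndependent k A.row) :
    ∃ c : m → κ, Function.Injective c ∧ (A.submatrix id c).det ≠ 0 := by
  have hcols : Submodule.span k (Set.range A.col) = ⊤ := by
    refine Submodule.eq_top_of_finrank_eq ?_
    rw [← Matrix.rank_eq_finrank_span_cols, Matrix.rank_eq_finrank_span_row,
      finrank_span_eq_card hA, Module.finrank_fintype_fun_eq_card]
  obtain ⟨ι, a, ha, hspan, hli⟩ := exists_linearIndependent' k A.col
  let e : ι ≃ m := (Module.Basis.mk hli (by rw [hspan, hcols])).indexEquiv (Pi.basisFun k m)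
  refine ⟨a ∘ e.symm, ha.comp e.symm.injective, ?_⟩
  rw [← isUnit_iff_ne_zero, ← Matrix.isUnit_iff_isUnit_det,
    ← Matrix.linearIndependent_cols_iff_isUnit]
  exact hli.comp e.symm e.symm.injective

lemma MinorsVanish.not_linearIndepOn {m κ : Type*} [Finite m] [Fintype κ] {t : ℕ}
    {A : Matrix m κ k} (hA : MinorsVanish t A) {s : Set m} (hs : s.ncard = t) :
    ¬ LinearIndepOn k A.row s := by
  intro hli
  let e : s ≃ Fin t := Finite.equivFinOfCardEq (by rw [Nat.card_coe_set_eq, hs])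
  let r : Fin t → m := Subtype.val ∘ e.symm
  obtain ⟨c, hc, hdet⟩ := exists_det_submatrix_ne_zero
    (show LinearIndependent k (A.submatrix r id).row from hli.comp e.symm e.symm.injective)
  exact hdet (hA r c (Subtype.val_injective.comp e.symm.injective) hc)

lemma minorsVanish_mul {m p κ : Type*} [Fintype p] {t : ℕ} (B : Matrix m p k)
    (C : Matrix p κ k) (ht : Fintype.card p < t) : MinorsVanish t (B * C) := by
  intro r c _ _
  rw [Matrix.submatrix_mul B C r id c Function.bijective_id]
  by_contra hdet
  have hunit : IsUnit (B.submatrix r id * C.submatrix id c) :=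
    (Matrix.isUnit_iff_isUnit_det _).mpr (isUnit_iff_ne_zero.mpr hdet)
  refine ht.not_ge ?_
  calc t = (B.submatrix r id * C.submatrix id c).rank := by
        rw [Matrix.rank_of_isUnit _ hunit, Fintype.card_fin]
    _ ≤ (B.submatrix r id).rank := Matrix.rank_mul_le_left _ _
    _ ≤ Fintype.card p := Matrix.rank_le_card_width _

end LinearAlgebra

section Realization

variable {k α W : Type*} [Field k] [AddCommGroup W] [Module k W] {M : Matroid α} {v : α → W}

lemma Matroid.IsRealizedBy.mem_span_iff_mem_closure (hE : M.E = Set.univ)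
    (hv : M.IsRealizedBy k v) {I : Set α} (hI : M.Indep I) (x : α) :
    v x ∈ Submodule.span k (v '' I) ↔ x ∈ M.closure I := by
  by_cases hxI : x ∈ I
  · exact iff_of_true (Submodule.subset_span (Set.mem_image_of_mem v hxI))
      (M.subset_closure I hI.subset_ground hxI)
  have h := (hv (insert x I)).symm.trans (hI.insert_indep_iff_of_notMem hxI)
  rw [linearIndepOn_insert hxI, and_iff_right ((hv I).mp hI), hE, Set.mem_sdiff,
    and_iff_right (Set.mem_univ x)] at h
  exact not_iff_not.mp h

lemma Matroid.IsRealizedBy.span_image_eq (hv : M.IsRealizedBy k v) {B : Set α}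
    (hB : M.IsBase B) : Submodule.span k (v '' B) = Submodule.span k (Set.range v) := by
  refine le_antisymm (Submodule.span_mono (Set.image_subset_range _ _)) (Submodule.span_le.mpr ?_)
  rintro _ ⟨x, rfl⟩
  by_cases hx : x ∈ B
  · exact Submodule.subset_span (Set.mem_image_of_mem v hx)
  by_contra hns
  have hins := (hv _).mpr ((linearIndepOn_insert hx).mpr ⟨(hv B).mp hB.indep, hns⟩)
  exact hx ((hB.eq_of_subset_indep hins (Set.subset_insert _ _)) ▸ Set.mem_insert x B)

end Realization

section Matroid

variable {k : Type*} [Field k] {n d h : ℕ} {M : Matroid (Fin n)} {H : Fin h → Set (Fin n)}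
  {B : Set (Fin n)}

lemma HasRank.ncard_eq {r : ℕ} (hrk : HasRank M r) (hB : M.IsBase B) : B.ncard = r := by
  obtain ⟨B₀, hB₀, rfl⟩ := hrk
  exact hB.ncard_eq_ncard_of_isBase hB₀

lemma HypEnum.exists_eq_closure_diff (hH : HypEnum M d H) (hrk : HasRank M (d + 1))
    (hB : M.IsBase B) {b : Fin n} (hb : b ∈ B) : ∃ j, H j = M.closure (B \ {b}) :=
  (hH.2 _).mpr ⟨M.isFlat_closure _, B \ {b}, (hB.indep.subset Set.sdiff_subset).isBasis_closure,
    by rw [Set.ncard_sdiff_singleton_of_mem hb, hrk.ncard_eq hB, Nat.add_sub_cancel]⟩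

lemma Matroid.IsRealizedBy.exists_linearMap_ker {W : Type*} [AddCommGroup W] [Module k W]
    [FiniteDimensional k W] {v : Fin n → W} (hE : M.E = Set.univ) (hv : M.IsRealizedBy k v)
    (hW : Module.finrank k W = d + 1) {F : Set (Fin n)} (hF : IsHyperplane M d F) :
    ∃ φ : W →ₗ[k] k, ∀ i, φ (v i) = 0 ↔ i ∈ F := by
  obtain ⟨hFflat, I, hI, hIc⟩ := hF
  set U := Submodule.span k (v '' I)
  have hU : Module.finrank k U = d := ((hv I).mp hI.indep).finrank_span_image_eq_ncard.trans hIc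
  have hQ : Module.finrank k (W ⧸ U) = Module.finrank k k := by
    have := U.finrank_quotient_add_finrank
    rw [hU, hW] at this
    rw [Module.finrank_self]
    omega
  refine ⟨(LinearEquiv.ofFinrankEq _ _ hQ).toLinearMap ∘ₗ U.mkQ, fun i => ?_⟩
  rw [LinearMap.comp_apply, LinearEquiv.coe_coe, LinearEquiv.map_eq_zero_iff, Submodule.mkQ_apply,
    Submodule.Quotient.mk_eq_zero, hv.mem_span_iff_mem_closure hE hI.indep,
    hI.closure_eq_closure, hFflat.closure]

lemma Matroid.IsRealizedBy.exists_isRealization {W : Type*} [AddCommGroup W] [Module k W]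
    {v : Fin n → W} (hrk : HasRank M (d + 1)) (hv : M.IsRealizedBy k v) :
    ∃ V : Matrix (Fin (d + 1)) (Fin n) k, IsRealization M V := by
  obtain ⟨B, hB, hBc⟩ := hrk
  have hspan := hv.span_image_eq hB
  set U := Submodule.span k (Set.range v)
  have hvU : ∀ i, v i ∈ U := fun i => Submodule.subset_span ⟨i, rfl⟩
  have : Module.Finite k U := Module.Finite.span_of_finite k (Set.finite_range v)
  have hU : Module.finrank k U = Module.finrank k (Fin (d + 1) → k) := by
    rw [← hspan, ((hv B).mp hB.indep).finrank_span_image_eq_ncard, hBc,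
      Module.finrank_fin_fun]
  let e := LinearEquiv.ofFinrankEq _ _ hU
  let f := U.subtype ∘ₗ e.symm.toLinearMap
  have hf : LinearMap.ker f = ⊥ :=
    LinearMap.ker_eq_bot.mpr (Subtype.val_injective.comp e.symm.injective)
  refine ⟨(Matrix.of fun i => e ⟨v i, hvU i⟩)ᵀ, fun I => (hv I).trans ?_⟩
  rw [LinearIndepOn, ← LinearMap.linearIndependent_iff f hf]
  change _ ↔ LinearIndependent k (f ∘ fun x : I => e ⟨v x, hvU x⟩)
  simp [f, Function.comp_def]

end Matroid

section SlackMatrix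

variable {k : Type*} [Field k] {n d h : ℕ} {M : Matroid (Fin n)} {H : Fin h → Set (Fin n)}
  {S : Matrix (Fin n) (Fin h) k} {B : Set (Fin n)}

lemma coeff_eq_zero_of_linearCombination_apply_eq_zero (hS : ∀ i j, S i j = 0 ↔ i ∈ H j)
    (hB : M.Indep B) {l : Fin n →₀ k} (hl : l ∈ Finsupp.supported k k B) {b : Fin n}
    (hb : b ∈ B) {j : Fin h} (hj : H j = M.closure (B \ {b}))
    (h0 : Finsupp.linearCombination k S.row l j = 0) : l b = 0 := by
  rw [Finsupp.linearCombination_apply_of_forall_ne (v := S.row) hl fun i hi hib => (hS i j).mpr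
    (hj ▸ M.subset_closure _ (Set.sdiff_subset.trans hB.subset_ground) ⟨hi, hib⟩)] at h0
  exact (mul_eq_zero.mp h0).resolve_right
    fun hbj => hB.notMem_closure_sdiff_of_mem hb (hj ▸ (hS b j).mp hbj)

lemma linearIndepOn_rows_of_isBase (hS : ∀ i j, S i j = 0 ↔ i ∈ H j) (hH : HypEnum M d H)
    (hrk : HasRank M (d + 1)) (hB : M.IsBase B) : LinearIndepOn k S.row B := by
  rw [linearIndepOn_iff]
  intro l hl h0
  ext b
  by_cases hb : b ∈ B
  · obtain ⟨j, hj⟩ := hH.exists_eq_closure_diff hrk hB hb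
    exact coeff_eq_zero_of_linearCombination_apply_eq_zero hS hB.indep hl hb hj (by rw [h0]; rfl)
  · exact Finsupp.notMem_support_iff.mp fun hb' => hb (hl hb')

lemma row_mem_span_of_isBase (hS : ∀ i j, S i j = 0 ↔ i ∈ H j) (hH : HypEnum M d H)
    (hrk : HasRank M (d + 1)) (hmin : MinorsVanish (d + 2) S) (hB : M.IsBase B) (x : Fin n) :
    S.row x ∈ Submodule.span k (S.row '' B) := by
  by_cases hx : x ∈ B
  · exact Submodule.subset_span (Set.mem_image_of_mem _ hx)
  by_contra hns
  refine hmin.not_linearIndepOn (s := insert x B)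
    (by rw [Set.ncard_insert_of_notMem hx, hrk.ncard_eq hB]) ?_
  exact (linearIndepOn_insert hx).mpr ⟨linearIndepOn_rows_of_isBase hS hH hrk hB, hns⟩

lemma row_mem_span_of_mem_closure (hS : ∀ i j, S i j = 0 ↔ i ∈ H j) (hH : HypEnum M d H)
    (hrk : HasRank M (d + 1)) (hmin : MinorsVanish (d + 2) S) {X : Set (Fin n)} {x : Fin n}
    (hx : x ∈ M.closure X) : S.row x ∈ Submodule.span k (S.row '' X) := by
  obtain ⟨I, hI⟩ := M.exists_isBasis' X
  obtain ⟨B, hB, hIB⟩ := hI.indep.exists_isBase_superset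
  obtain ⟨l, hl, hlx⟩ := (Finsupp.mem_span_image_iff_linearCombination k).mp
    (row_mem_span_of_isBase hS hH hrk hmin hB x)
  refine Submodule.span_mono (Set.image_mono hI.subset)
    ((Finsupp.mem_span_image_iff_linearCombination k).mpr ⟨l, fun b hb => ?_, hlx⟩)
  by_contra hbI
  obtain ⟨j, hj⟩ := hH.exists_eq_closure_diff hrk hB (hl hb)
  refine Finsupp.mem_support_iff.mp hb
    (coeff_eq_zero_of_linearCombination_apply_eq_zero hS hB.indep hl (hl hb) hj ?_)
  rw [hlx]
  refine (hS x j).mpr (hj ▸ M.closure_subset_closure ?_ (hI.closure_eq_closure ▸ hx))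
  exact Set.subset_sdiff_singleton hIB hbI

lemma isRealizedBy_rows (hE : M.E = Set.univ) (hS : ∀ i j, S i j = 0 ↔ i ∈ H j)
    (hH : HypEnum M d H) (hrk : HasRank M (d + 1)) (hmin : MinorsVanish (d + 2) S) :
    M.IsRealizedBy k S.row := by
  intro I
  refine ⟨fun hI => ?_, fun hli => ?_⟩
  · obtain ⟨B, hB, hIB⟩ := hI.exists_isBase_superset
    exact (linearIndepOn_rows_of_isBase hS hH hrk hB).mono hIB
  rw [Matroid.indep_iff_forall_notMem_closure_sdiff (hE ▸ Set.subset_univ I)]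
  intro x hxI hcl
  have := (hli.mono Set.sdiff_subset).mem_span_iff.mp
    (row_mem_span_of_mem_closure hS hH hrk hmin hcl)
    (by rwa [Set.insert_sdiff_singleton, Set.insert_eq_of_mem hxI])
  exact this.2 rfl

end SlackMatrix

section SlackIdeal

variable {k : Type*} [Field k] {n d h : ℕ} {M : Matroid (Fin n)} {H : Fin h → Set (Fin n)}

lemma exists_isNormalMatrix (hE : M.E = Set.univ) (hH : HypEnum M d H)
    {V : Matrix (Fin (d + 1)) (Fin n) k} (hV : IsRealization M V) :
    ∃ W, IsNormalMatrix H V W := by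
  have hv : M.IsRealizedBy k Vᵀ.row := hV
  choose φ hφ using fun j =>
    hv.exists_linearMap_ker hE (Module.finrank_fin_fun k) ((hH.2 (H j)).mp ⟨j, rfl⟩)
  refine ⟨fun r j => φ j fun r' => if r = r' then 1 else 0, fun i j => ?_⟩
  rw [← hφ j i, (φ j).pi_apply_eq_sum_univ]
  exact Iff.of_eq (congrArg (· = 0) (Finset.sum_congr rfl fun r _ => mul_comm _ _))

lemma slackEval_eq_zero_iff {x : SlackVar H → k} (hx : ∀ e, x e ≠ 0) (i : Fin n) (j : Fin h) :
    slackEval H x i j = 0 ↔ i ∈ H j := by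
  unfold slackEval
  split_ifs with hij
  · exact iff_of_true rfl hij
  · exact iff_of_false (hx _) hij

lemma exists_minorsVanish_slackEval_of_isRealization (hE : M.E = Set.univ) (hH : HypEnum M d H)
    {V : Matrix (Fin (d + 1)) (Fin n) k} (hV : IsRealization M V) :
    ∃ x : SlackVar H → k, (∀ e, x e ≠ 0) ∧ MinorsVanish (d + 2) (slackEval H x) := by
  obtain ⟨W, hW⟩ := exists_isNormalMatrix hE hH hV
  have hVW : ∀ i j, (Vᵀ * W) i j = 0 ↔ i ∈ H j := fun i j => by
    rw [← hW, Matrix.mul_apply]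
    simp only [Matrix.transpose_apply, mul_comm]
  refine ⟨fun e => (Vᵀ * W) e.1.1 e.1.2, fun e => (hVW _ _).not.mpr e.2, ?_⟩
  have hSW : slackEval H (fun e => (Vᵀ * W) e.1.1 e.1.2) = Vᵀ * W := by
    ext i j
    by_cases hij : i ∈ H j
    · simp only [slackEval, hij, dif_pos, ((hVW i j).mpr hij)]
    · simp only [slackEval, hij, dif_neg, not_false_iff]
  rw [hSW]
  exact minorsVanish_mul _ _ (by rw [Fintype.card_fin]; omega)

lemma eval_det_submatrix_symbSlack (x : SlackVar H → k) {t : ℕ} (r : Fin t → Fin n)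
    (c : Fin t → Fin h) :
    eval x ((symbSlack H k).submatrix r c).det = ((slackEval H x).submatrix r c).det := by
  rw [RingHom.map_det, RingHom.mapMatrix_apply, ← Matrix.submatrix_map]
  congr 2
  ext i j
  by_cases hij : i ∈ H j <;> simp [symbSlack, slackEval, hij]

lemma minorIdeal_le_ker_eval_iff {x : SlackVar H → k} :
    minorIdeal d H k ≤ RingHom.ker (eval x) ↔ MinorsVanish (d + 2) (slackEval H x) := by
  rw [minorIdeal, Ideal.span_le]
  constructor
  · intro hJ r c hr hc
    rw [← eval_det_submatrix_symbSlack]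
    exact hJ ⟨r, c, hr, hc, rfl⟩
  · rintro hmin _ ⟨r, c, hr, hc, rfl⟩
    rw [SetLike.mem_coe, RingHom.mem_ker, eval_det_submatrix_symbSlack]
    exact hmin r c hr hc

lemma eval_allVarsProd_ne_zero_iff {x : SlackVar H → k} :
    eval x (allVarsProd H k) ≠ 0 ↔ ∀ e, x e ≠ 0 := by
  simp [allVarsProd, Finset.prod_ne_zero_iff]

lemma one_notMem_slackSet {x : SlackVar H → k} (hx : ∀ e, x e ≠ 0)
    (hmin : MinorsVanish (d + 2) (slackEval H x)) :
    (1 : MvPolynomial (SlackVar H) k) ∉ slackSet d H k := by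
  rintro ⟨N, hN⟩
  have := minorIdeal_le_ker_eval_iff.mpr hmin hN
  rw [RingHom.mem_ker, mul_one, map_pow] at this
  exact pow_ne_zero N (eval_allVarsProd_ne_zero_iff.mpr hx) this

lemma one_mem_slackSet_of_forall_not_minorsVanish [IsAlgClosed k]
    (h : ∀ x : SlackVar H → k, (∀ e, x e ≠ 0) → ¬ MinorsVanish (d + 2) (slackEval H x)) :
    (1 : MvPolynomial (SlackVar H) k) ∈ slackSet d H k := by
  have hrad : allVarsProd H k ∈ (minorIdeal d H k).radical := by
    rw [← vanishingIdeal_zeroLocus_eq_radical (K := k), mem_vanishingIdeal_iff]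
    intro x hx
    by_contra hP
    exact h x (eval_allVarsProd_ne_zero_iff.mp hP) (minorIdeal_le_ker_eval_iff.mp hx)
  obtain ⟨N, hN⟩ := hrad
  exact ⟨N, by rwa [mul_one]⟩

end SlackIdeal

/-- if `1 ∈ I_M` then `M` is not realizable over `k`; if `k` is algebraically
closed and `M` is not realizable over `k` then `1 ∈ I_M`. -/
theorem stmt9 {k : Type*} [Field k] {n d h : ℕ} (M : Matroid (Fin n))
    (hE : M.E = Set.univ) (hrk : HasRank M (d + 1))
    (H : Fin h → Set (Fin n)) (hH : HypEnum M d H) :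
    ((1 : MvPolynomial (SlackVar H) k) ∈ slackSet d H k →
      ¬ ∃ V : Matrix (Fin (d + 1)) (Fin n) k, IsRealization M V) ∧
    (IsAlgClosed k →
      (¬ ∃ V : Matrix (Fin (d + 1)) (Fin n) k, IsRealization M V) →
      (1 : MvPolynomial (SlackVar H) k) ∈ slackSet d H k) := by
  refine ⟨fun h1 ⟨V, hV⟩ => ?_, fun _ hno => ?_⟩
  · obtain ⟨x, hx, hmin⟩ := exists_minorsVanish_slackEval_of_isRealization hE hH hV
    exact one_notMem_slackSet hx hmin h1
  · refine one_mem_slackSet_of_forall_not_minorsVanish fun x hx hmin => hno ?_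
    exact (isRealizedBy_rows hE (slackEval_eq_zero_iff hx) hH hrk hmin).exists_isRealization hrk
end
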